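/- arXiv:cs/0207023 — 2 statements merged into one kernel-verified Lean document; each statement's English description precedes it below -/
import Mathlib

section
/- If the set of static causal laws D_C is empty and action a is executable in state s, then Φ(a,s) equals the set of interpretations s' satisfying E(a,s) that are closest to s under symmetric difference, i.e., s' ∈ Φ(a,s) iff E(a,s) ⊆ s' and there is no interpretation s'' with E(a,s) ⊆ s'' and (s'' Δ s) ⊊ (s' Δ s). -/
/-- A state is a maximal consistent set of fluent literals: it contains the
positive literal `(true, f)` iff it does not contain `(false, f)`. -/
def IsState {F : Type} (s : Set (Bool × F)) : Prop :=
  ∀ f : F, ((true, f) ∈ s ↔ (false, f) ∉ s)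

/-- Negation of a literal. -/
def lneg {F : Type} (x : Bool × F) : Bool × F := (!x.1, x.2)

lemma lneg_lneg {F : Type} (x : Bool × F) : lneg (lneg x) = x := by
  simp [lneg]

lemma lneg_ne {F : Type} (x : Bool × F) : lneg x ≠ x := by
  obtain ⟨b, f⟩ := x; cases b <;> simp [lneg]

lemma state_mem_iff {F : Type} {s : Set (Bool × F)} (hs : IsState s) (x : Bool × F) :
    x ∈ s ↔ lneg x ∉ s := by
  obtain ⟨b, f⟩ := x
  have := hs f
  cases b <;> simp only [lneg, Bool.not_false, Bool.not_true] <;> tauto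

/-- with an empty set of static causal laws, for an action `a`
executable in state `s` with direct effects `E = E(a,s)`, the successor states
`Φ(a,s) = {s' | s' is a state and s' = Cl_∅(E ∪ (s ∩ s')) = E ∪ (s ∩ s')}` are
exactly the states containing `E` that are closest to `s` under symmetric
difference. -/
theorem phi_empty_static_laws_closest {F : Type}
    (s : Set (Bool × F)) (hs : IsState s)
    (E : Set (Bool × F))
    (s' : Set (Bool × F)) (hs' : IsState s') :
    s' = E ∪ (s ∩ s') ↔
      (E ⊆ s' ∧
        ¬ ∃ s'' : Set (Bool × F), IsState s'' ∧ E ⊆ s'' ∧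
          ((s'' \ s) ∪ (s \ s'')) ⊂ ((s' \ s) ∪ (s \ s'))) := by
  constructor
  · intro h
    have hE : E ⊆ s' := by rw [h]; exact Set.subset_union_left
    -- any literal in s' \ s is in E
    have hkey : ∀ x, x ∈ s' → x ∉ s → x ∈ E := by
      intro x hx hxs
      rw [h] at hx
      rcases hx with hx | hx
      · exact hx
      · exact absurd hx.1 hxs
    refine ⟨hE, ?_⟩
    rintro ⟨t, ht, hEt, hsub, hnsup⟩
    apply hnsup
    intro x hx
    rcases hx with ⟨hx1, hx2⟩ | ⟨hx1, hx2⟩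
    · -- x ∈ s' \ s : then x ∈ E ⊆ t
      exact Or.inl ⟨hEt (hkey x hx1 hx2), hx2⟩
    · -- x ∈ s \ s' : lneg x ∈ s' \ s ⊆ E ⊆ t, so x ∉ t
      have hnx : lneg x ∈ s' := by
        by_contra hc
        exact hx2 (((state_mem_iff hs' x)).2 hc)
      have hnxs : lneg x ∉ s := by
        intro hc
        exact ((state_mem_iff hs (lneg x)).1 hc) (by rwa [lneg_lneg])
      have hnxt : lneg x ∈ t := hEt (hkey _ hnx hnxs)
      have hxt : x ∉ t := fun hc => (state_mem_iff ht x).1 hc hnxt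
      exact Or.inr ⟨hx1, hxt⟩
  · rintro ⟨hE, hmin⟩
    apply Set.Subset.antisymm
    · intro x hx
      by_cases hxs : x ∈ s
      · exact Or.inr ⟨hxs, hx⟩
      by_cases hxE : x ∈ E
      · exact Or.inl hxE
      exfalso
      apply hmin
      -- flip x in s'
      set t : Set (Bool × F) := insert (lneg x) (s' \ {x}) with ht_def
      have hxns' : lneg x ∉ s' := (state_mem_iff hs' x).1 hx
      have hnxs : lneg x ∈ s := by
        by_contra hc
        exact hxs ((state_mem_iff hs x).2 hc)
      have hmem_t : ∀ y, y ∈ t ↔ (y = lneg x ∨ (y ∈ s' ∧ y ≠ x)) := by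
        intro y; simp [ht_def]
      have htstate : IsState t := by
        intro f
        obtain ⟨b, f0⟩ := x
        by_cases hf : f = f0
        · subst hf
          have h1 : ((!b, f) : Bool × F) ∉ s' := hxns'
          have h2 : ((b, f) : Bool × F) ∈ s' := hx
          rw [hmem_t, hmem_t]
          cases b <;> simp [lneg]
        · have hl : (lneg (b, f0)).2 = f0 := rfl
          rw [hmem_t, hmem_t]
          have h1 : ((true, f) : Bool × F) ≠ lneg (b, f0) := by
            intro hc; exact hf (congrArg Prod.snd hc)
          have h2 : ((false, f) : Bool × F) ≠ lneg (b, f0) := by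
            intro hc; exact hf (congrArg Prod.snd hc)
          have h3 : ((true, f) : Bool × F) ≠ (b, f0) := by
            intro hc; exact hf (congrArg Prod.snd hc)
          have h4 : ((false, f) : Bool × F) ≠ (b, f0) := by
            intro hc; exact hf (congrArg Prod.snd hc)
          have := hs' f
          tauto
      have hEt : E ⊆ t := by
        intro y hy
        rw [hmem_t]
        exact Or.inr ⟨hE hy, fun hc => hxE (hc ▸ hy)⟩
      refine ⟨t, htstate, hEt, ?_, ?_⟩
      · -- Δ(t) ⊆ Δ(s')
        intro y hy
        rcases hy with ⟨hy1, hy2⟩ | ⟨hy1, hy2⟩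
        · rw [hmem_t] at hy1
          rcases hy1 with rfl | ⟨hy1, _⟩
          · exact absurd hnxs hy2
          · exact Or.inl ⟨hy1, hy2⟩
        · rw [hmem_t] at hy2
          push_neg at hy2
          have hyx : y ≠ x := fun hc => hxs (hc ▸ hy1)
          have : y ∉ s' := fun hc => hyx (hy2.2 hc)
          exact Or.inr ⟨hy1, this⟩
      · -- strict: x ∈ Δ(s') \ Δ(t)
        intro hc
        have hxd : x ∈ (s' \ s) ∪ (s \ s') := Or.inl ⟨hx, hxs⟩
        have := hc hxd
        rcases this with ⟨h1, _⟩ | ⟨h1, _⟩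
        · rw [hmem_t] at h1
          rcases h1 with h1 | ⟨_, h1⟩
          · exact lneg_ne x h1.symm
          · exact h1 rfl
        · exact hxs h1
    · intro x hx
      rcases hx with hx | hx
      · exact hE hx
      · exact hx.2
end

section
/- Suppose a ground normal logic program Π admits a level mapping λ from atoms to natural numbers such that for every rule a0 ← a1,...,am, not b1,..., not bk in Π, λ(a0) ≥ λ(a_i) for all i and λ(a0) > λ(b_j) for all j. Then Π has at most one answer set (the program is locally stratified and its answer set, if it exists, is unique). -/
/-- A rule `head ← pos, not neg` of a normal logic program. -/
structure NRule (A : Type) where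
  head : A
  pos : Set A
  neg : Set A

/-- `X` is closed under the (positive) reduct of `P` with respect to `S`:
for every rule whose negative body is disjoint from `S`, if its positive body
is contained in `X` then so is its head. -/
def ClosedUnderReduct {A : Type} (P : Set (NRule A)) (S X : Set A) : Prop :=
  ∀ r ∈ P, r.neg ∩ S = ∅ → r.pos ⊆ X → r.head ∈ X

/-- `S` is an answer set of `P`: `S` is the least model of the
Gelfond–Lifschitz reduct `P^S`. -/
def AnswerSet {A : Type} (P : Set (NRule A)) (S : Set A) : Prop :=
  IsLeast {X | ClosedUnderReduct P S X} S

/-- a ground normal program admitting a level mapping `lam`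
(`λ(head) ≥ λ(a)` for positive body atoms, `λ(head) > λ(b)` for negated body
atoms) is locally stratified and has at most one answer set. -/
theorem locally_stratified_unique_answer_set {A : Type}
    (P : Set (NRule A)) (lam : A → ℕ)
    (hlam : ∀ r ∈ P, (∀ a ∈ r.pos, lam a ≤ lam r.head) ∧
      (∀ b ∈ r.neg, lam b < lam r.head)) :
    ∀ S1 S2 : Set A, AnswerSet P S1 → AnswerSet P S2 → S1 = S2 := by
  intro S1 S2 h1 h2
  have key : ∀ n, ∀ a, lam a ≤ n → (a ∈ S1 ↔ a ∈ S2) := by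
    intro n
    induction n using Nat.strong_induction_on with
    | _ n ih =>
      have agree : ∀ a, lam a < n → (a ∈ S1 ↔ a ∈ S2) := fun a h => ih (lam a) h a le_rfl
      have sub : ∀ (T U : Set A), AnswerSet P T → AnswerSet P U →
          (∀ a, lam a < n → (a ∈ T ↔ a ∈ U)) → ∀ a, lam a ≤ n → a ∈ T → a ∈ U := by
        intro T U hT hU hag a ha haT
        have hclosed : ClosedUnderReduct P T (U ∪ {x | n < lam x}) := by
          intro r hr hneg hpos
          by_cases hh : n < lam r.head
          · exact Or.inr hh
          push_neg at hh
          left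
          refine hU.1 r hr ?_ ?_
          · ext b
            simp only [Set.mem_inter_iff, Set.mem_empty_iff_false, iff_false, not_and]
            intro hb hbU
            have hlt : lam b < n := lt_of_lt_of_le ((hlam r hr).2 b hb) hh
            have hbT : b ∈ T := (hag b hlt).mpr hbU
            exact Set.eq_empty_iff_forall_notMem.mp hneg b ⟨hb, hbT⟩
          · intro x hx
            rcases hpos hx with h | h
            · exact h
            · exact absurd (le_trans ((hlam r hr).1 x hx) hh) (not_le.mpr h)
        rcases hT.2 hclosed haT with h | h
        · exact h
        · exact absurd ha (not_le.mpr h)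
      intro a ha
      exact ⟨sub S1 S2 h1 h2 agree a ha, sub S2 S1 h2 h1 (fun a h => (agree a h).symm) a ha⟩
  ext a
  exact key (lam a) a le_rfl
end
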